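/- arXiv:1005.2951 — 2 statements merged into one kernel-verified Lean document; each statement's English description precedes it below -/
import Mathlib

section
/- For every positive integer k, I_{k+1,k} = (−1)^{k+1} · k! · (q_{3k} e − p_{3k}), where I_{k+1,k} := ∫₀¹ x^{k+1} (1-x)ᵏ eˣ dx and p_n/q_n is the n-th convergent of the continued fraction [2; 1, 2, 1, 1, 4, 1, ...]. -/
/-!
Put `I(m, n) = ∫₀¹ xᵐ (1 - x)ⁿ eˣ dx`. The identity `x + (1 - x) = 1` and integration by parts
give linear relations between neighbouring `I(m, n)`. Along the diagonal triple `I(k, k+1)`,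
`I(k+1, k+1)`, `I(k+2, k+1)`, normalised by factorials and signs, these relations are exactly the
recurrence of the convergents of `e = [2; 1, 2, 1, 1, 4, 1, …]`, and the initial values
`I(0, 1) = e - 2`, `I(1, 1) = 3 - e` are those of `±(qₙ e - pₙ)` for `n = 1, 2`.
-/

open Real intervalIntegral Nat

noncomputable def expBetaIntegral (m n : ℕ) : ℝ :=
  ∫ x in (0:ℝ)..1, x ^ m * (1 - x) ^ n * exp x

lemma intervalIntegrable_expBetaIntegrand (m n : ℕ) :
    IntervalIntegrable (fun x : ℝ => x ^ m * (1 - x) ^ n * exp x) MeasureTheory.volume 0 1 :=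
  (by fun_prop : Continuous fun x : ℝ => x ^ m * (1 - x) ^ n * exp x).intervalIntegrable _ _

lemma expBetaIntegral_eq_add (m n : ℕ) :
    expBetaIntegral m n = expBetaIntegral m (n + 1) + expBetaIntegral (m + 1) n := by
  rw [expBetaIntegral, expBetaIntegral, expBetaIntegral,
    ← integral_add (intervalIntegrable_expBetaIntegrand m (n + 1))
      (intervalIntegrable_expBetaIntegrand (m + 1) n)]
  congr 1 with x
  ring

lemma hasDerivAt_pow_mul_one_sub_pow (m n : ℕ) (x : ℝ) :
    HasDerivAt (fun x : ℝ => x ^ (m + 1) * (1 - x) ^ (n + 1))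
      ((m + 1) * x ^ m * (1 - x) ^ (n + 1) - (n + 1) * x ^ (m + 1) * (1 - x) ^ n) x := by
  have h := (hasDerivAt_pow (m + 1) x).fun_mul (((hasDerivAt_id' x).const_sub 1).fun_pow (n + 1))
  refine h.congr_deriv ?_
  simp only [Nat.add_sub_cancel, Nat.cast_succ]
  ring

lemma expBetaIntegral_succ_succ (m n : ℕ) :
    expBetaIntegral (m + 1) (n + 1) =
      (n + 1) * expBetaIntegral (m + 1) n - (m + 1) * expBetaIntegral m (n + 1) := by
  have ibp := integral_mul_deriv_eq_deriv_mul (a := 0) (b := 1)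
    (fun x _ => hasDerivAt_pow_mul_one_sub_pow m n x) (fun x _ => hasDerivAt_exp x)
    ((by fun_prop : Continuous _).intervalIntegrable _ _)
    ((by fun_prop : Continuous _).intervalIntegrable _ _)
  simp only [one_pow, sub_self, zero_pow (succ_ne_zero _), mul_zero, zero_mul, sub_zero,
    zero_sub] at ibp
  rw [expBetaIntegral, ibp, expBetaIntegral, expBetaIntegral,
    ← integral_const_mul, ← integral_const_mul, ← integral_sub, ← integral_neg]
  · congr 1 with x
    ring
  all_goals exact (intervalIntegrable_expBetaIntegrand _ _).const_mul _

lemma expBetaIntegral_zero_zero : expBetaIntegral 0 0 = exp 1 - 1 := by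
  simp [expBetaIntegral]

lemma expBetaIntegral_one_zero : expBetaIntegral 1 0 = 1 := by
  have ibp := integral_mul_deriv_eq_deriv_mul (a := 0) (b := 1)
    (fun x _ => hasDerivAt_id x) (fun x _ => hasDerivAt_exp x)
    (by simp) ((by fun_prop : Continuous _).intervalIntegrable _ _)
  simp only [id, one_mul] at ibp
  simp [expBetaIntegral, ibp]

lemma expBetaIntegral_zero_one : expBetaIntegral 0 1 = exp 1 - 2 := by
  linarith [expBetaIntegral_eq_add 0 0, expBetaIntegral_zero_zero, expBetaIntegral_one_zero]

lemma expBetaIntegral_one_one : expBetaIntegral 1 1 = 3 - exp 1 := by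
  have h := expBetaIntegral_succ_succ 0 0
  push_cast at h
  linarith [expBetaIntegral_one_zero, expBetaIntegral_zero_one]

lemma expBetaIntegral_add_two_succ (k : ℕ) :
    expBetaIntegral (k + 2) (k + 1) =
      (k + 1) * expBetaIntegral k (k + 1) - (2 * k + 2) * expBetaIntegral (k + 1) (k + 1) := by
  have h₁ := expBetaIntegral_succ_succ (k + 1) k
  have h₂ := expBetaIntegral_eq_add (k + 1) k
  have h₃ := expBetaIntegral_succ_succ k k
  push_cast at h₁
  linear_combination h₁ - ((k : ℝ) + 1) * h₂ - h₃

/-- The recurrence `r n = a n * r (n - 1) + r (n - 2)` (`n ≥ 3`) of the convergents of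
`[2; 1, 2, 1, 1, 4, 1, …]`, split according to `n mod 3`. -/
def SatisfiesECFRecurrence (r : ℕ → ℝ) : Prop :=
  ∀ k : ℕ, r (3 * k + 3) = (2 * k + 2) * r (3 * k + 2) + r (3 * k + 1) ∧
    r (3 * k + 4) = r (3 * k + 3) + r (3 * k + 2) ∧ r (3 * k + 5) = r (3 * k + 4) + r (3 * k + 3)

section

variable {r : ℕ → ℝ} {k : ℕ}

lemma expBetaIntegral_add_two_succ_eq
    (hr : r (3 * k + 3) = (2 * k + 2) * r (3 * k + 2) + r (3 * k + 1))
    (hC : expBetaIntegral k (k + 1) = (-1) ^ k * k ! * r (3 * k + 1))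
    (hA : expBetaIntegral (k + 1) (k + 1) = (-1) ^ (k + 1) * (k + 1)! * r (3 * k + 2)) :
    expBetaIntegral (k + 2) (k + 1) = (-1) ^ k * (k + 1)! * r (3 * k + 3) := by
  rw [expBetaIntegral_add_two_succ, hC, hA, hr, factorial_succ]
  push_cast
  ring

lemma expBetaIntegral_eq_of_satisfiesECFRecurrence (hr : SatisfiesECFRecurrence r)
    (h₁ : r 1 = exp 1 - 2) (h₂ : r 2 = exp 1 - 3) (k : ℕ) :
    expBetaIntegral k (k + 1) = (-1) ^ k * k ! * r (3 * k + 1) ∧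
      expBetaIntegral (k + 1) (k + 1) = (-1) ^ (k + 1) * (k + 1)! * r (3 * k + 2) := by
  induction k with
  | zero =>
    refine ⟨by simp [expBetaIntegral_zero_one, h₁], ?_⟩
    simp [expBetaIntegral_one_one, h₂]
  | succ k ih =>
    obtain ⟨hr₃, hr₄, hr₅⟩ := hr k
    have hB := expBetaIntegral_add_two_succ_eq hr₃ ih.1 ih.2
    have hsplit : expBetaIntegral (k + 1) (k + 1) =
        expBetaIntegral (k + 1) (k + 2) + expBetaIntegral (k + 2) (k + 1) :=
      expBetaIntegral_eq_add (k + 1) (k + 1)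
    have hC : expBetaIntegral (k + 1) (k + 2) = (-1) ^ (k + 1) * (k + 1)! * r (3 * k + 4) := by
      rw [hr₄]
      linear_combination ih.2 - hsplit - hB
    refine ⟨by simpa [mul_add] using hC, ?_⟩
    have hA := expBetaIntegral_succ_succ (k + 1) (k + 1)
    rw [show 3 * (k + 1) + 2 = 3 * k + 5 by ring, hr₅, factorial_succ (k + 1)]
    rw [hB, hC] at hA
    push_cast at hA ⊢
    linear_combination hA

end

lemma satisfiesECFRecurrence_of_cf {a : ℕ → ℕ} {r : ℕ → ℝ}
    (ha3 : ∀ k : ℕ, 1 ≤ k → a (3 * k) = 2 * k)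
    (ha : ∀ k : ℕ, 1 ≤ k → a (3 * k - 1) = 1 ∧ a (3 * k + 1) = 1)
    (hr : ∀ n : ℕ, 1 ≤ n → r (n + 2) = a (n + 2) * r (n + 1) + r n) :
    SatisfiesECFRecurrence r := by
  intro k
  have a₃ : a (3 * k + 3) = 2 * (k + 1) := ha3 (k + 1) (by omega)
  have a₄ : a (3 * k + 4) = 1 := (ha (k + 1) (by omega)).2
  have a₅ : a (3 * k + 5) = 1 := (ha (k + 2) (by omega)).1
  refine ⟨?_, ?_, ?_⟩
  · have h : r (3 * k + 3) = a (3 * k + 3) * r (3 * k + 2) + r (3 * k + 1) :=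
      hr (3 * k + 1) (by omega)
    rw [h, a₃]
    push_cast
    ring
  · have h : r (3 * k + 4) = a (3 * k + 4) * r (3 * k + 3) + r (3 * k + 2) :=
      hr (3 * k + 2) (by omega)
    simpa [a₄] using h
  · have h : r (3 * k + 5) = a (3 * k + 5) * r (3 * k + 4) + r (3 * k + 3) :=
      hr (3 * k + 3) (by omega)
    simpa [a₅] using h

lemma cast_mul_sub_eq_of_recurrence {a : ℕ → ℕ} {p q : ℕ → ℤ} {n : ℕ} (x : ℝ)
    (hp : p (n + 2) = a (n + 2) * p (n + 1) + p n)
    (hq : q (n + 2) = a (n + 2) * q (n + 1) + q n) :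
    (q (n + 2) * x - p (n + 2) : ℝ) =
      a (n + 2) * (q (n + 1) * x - p (n + 1)) + (q n * x - p n) := by
  rw [hp, hq]
  push_cast
  ring

theorem stmt8_general (a : ℕ → ℕ) (p q : ℕ → ℤ)
    (ha3 : ∀ k : ℕ, 1 ≤ k → a (3 * k) = 2 * k)
    (ha : ∀ k : ℕ, 1 ≤ k → a (3 * k - 1) = 1 ∧ a (3 * k + 1) = 1)
    (hp1 : p 1 = 2) (hp2 : p 2 = 3) (hq1 : q 1 = 1) (hq2 : q 2 = 1)
    (hrec : ∀ n : ℕ, 3 ≤ n →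
      p n = a n * p (n - 1) + p (n - 2) ∧ q n = a n * q (n - 1) + q (n - 2))
    (k : ℕ) (hk : 1 ≤ k) :
    (∫ x in (0:ℝ)..1, x ^ (k + 1) * (1 - x) ^ k * Real.exp x) =
      (-1 : ℝ) ^ (k + 1) * (Nat.factorial k) *
        ((q (3 * k) : ℝ) * Real.exp 1 - (p (3 * k) : ℝ)) := by
  set r : ℕ → ℝ := fun n => q n * exp 1 - p n
  have hr : SatisfiesECFRecurrence r := by
    refine satisfiesECFRecurrence_of_cf ha3 ha fun n hn => ?_
    obtain ⟨hp, hq⟩ := hrec (n + 2) (by omega)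
    exact cast_mul_sub_eq_of_recurrence _ (by simpa using hp) (by simpa using hq)
  obtain ⟨j, rfl⟩ : ∃ j, k = j + 1 := ⟨k - 1, by omega⟩
  obtain ⟨hC, hA⟩ := expBetaIntegral_eq_of_satisfiesECFRecurrence hr
    (by simp [r, hp1, hq1]) (by simp [r, hp2, hq2]) j
  have hB := expBetaIntegral_add_two_succ_eq ((hr j).1) hC hA
  rw [expBetaIntegral] at hB
  rw [hB, show 3 * (j + 1) = 3 * j + 3 by ring]
  ring

theorem stmt8 (a : ℕ → ℕ) (p q : ℕ → ℤ)
    (ha1 : a 1 = 2)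
    (ha3 : ∀ k : ℕ, 1 ≤ k → a (3 * k) = 2 * k)
    (ha : ∀ k : ℕ, 1 ≤ k → a (3 * k - 1) = 1 ∧ a (3 * k + 1) = 1)
    (hp1 : p 1 = 2) (hp2 : p 2 = 3) (hq1 : q 1 = 1) (hq2 : q 2 = 1)
    (hrec : ∀ n : ℕ, 3 ≤ n →
      p n = a n * p (n - 1) + p (n - 2) ∧ q n = a n * q (n - 1) + q (n - 2))
    (k : ℕ) (hk : 1 ≤ k) :
    (∫ x in (0:ℝ)..1, x ^ (k + 1) * (1 - x) ^ k * Real.exp x) =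
      (-1 : ℝ) ^ (k + 1) * (Nat.factorial k) *
        ((q (3 * k) : ℝ) * Real.exp 1 - (p (3 * k) : ℝ)) :=
  stmt8_general a p q ha3 ha hp1 hp2 hq1 hq2 hrec k hk
end

section
/- The regular continued fraction [2; 1, 2, 1, 1, 4, 1, 1, 6, 1, ...] (with partial quotients a_1 = 2, a_{3k} = 2k, a_{3k−1} = a_{3k+1} = 1 for k ≥ 1) converges to e. -/
/-!
Following Hermite and Cohn, consider `J m n = ∫₀¹ xᵐ (x - 1)ⁿ eˣ dx` (`hermiteIntegral m n`).
Integration by parts gives three-term relations between `J n (n + 1)`, `J (n + 1) (n + 1)` and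
`J (n + 2) (n + 1)` which,
after dividing by factorials, are exactly the recurrence of the convergents of
`[2; 1, 2, 1, 1, 4, 1, …]` applied to the errors `p m - q m * e`. Each of these errors is thus
an integral of size at most `e` divided by a factorial of about `m / 3`, so it tends to `0`;
since `q m ≥ 1`, so does `p m / q m - e`.
-/

open Filter Real Topology
open scoped Nat

noncomputable def hermiteIntegral (m n : ℕ) : ℝ := ∫ x in (0 : ℝ)..1, x ^ m * (x - 1) ^ n * exp x

namespace hermiteIntegral

lemma intervalIntegrable (m n : ℕ) :
    IntervalIntegrable (fun x : ℝ => x ^ m * (x - 1) ^ n * exp x) MeasureTheory.volume 0 1 :=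
  (by fun_prop : Continuous fun x : ℝ => x ^ m * (x - 1) ^ n * exp x).intervalIntegrable 0 1

/-- Integrate the derivative of `x ^ (m + 1) * (x - 1) ^ (n + 1) * exp x`, zero at both ends. -/
lemma integration_by_parts (m n : ℕ) :
    (m + 1) * hermiteIntegral m (n + 1) + (n + 1) * hermiteIntegral (m + 1) n
      + hermiteIntegral (m + 1) (n + 1) = 0 := by
  have hderiv : ∀ x ∈ Set.uIcc (0 : ℝ) 1,
      HasDerivAt (fun y : ℝ => y ^ (m + 1) * (y - 1) ^ (n + 1) * exp y)
        ((m + 1) * (x ^ m * (x - 1) ^ (n + 1) * exp x)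
          + ((n + 1) * (x ^ (m + 1) * (x - 1) ^ n * exp x)
            + x ^ (m + 1) * (x - 1) ^ (n + 1) * exp x)) x := by
    intro x _
    have hx : HasDerivAt (fun y : ℝ => y ^ (m + 1)) ((m + 1) * x ^ m) x := by
      simpa using hasDerivAt_pow (m + 1) x
    have hx1 : HasDerivAt (fun y : ℝ => (y - 1) ^ (n + 1)) ((n + 1) * (x - 1) ^ n) x := by
      simpa using ((hasDerivAt_id x).sub_const 1).fun_pow (n + 1)
    exact ((hx.fun_mul hx1).fun_mul (hasDerivAt_exp x)).congr_deriv (by ring)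
  have hftc := intervalIntegral.integral_eq_sub_of_hasDerivAt hderiv
    ((((intervalIntegrable m (n + 1)).const_mul _).add
      (((intervalIntegrable (m + 1) n).const_mul _).add (intervalIntegrable (m + 1) (n + 1)))))
  rw [intervalIntegral.integral_add ((intervalIntegrable m (n + 1)).const_mul _)
      (((intervalIntegrable (m + 1) n).const_mul _).add (intervalIntegrable (m + 1) (n + 1))),
    intervalIntegral.integral_add ((intervalIntegrable (m + 1) n).const_mul _)
      (intervalIntegrable (m + 1) (n + 1)),
    intervalIntegral.integral_const_mul, intervalIntegral.integral_const_mul] at hftc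
  simp only [hermiteIntegral]
  simpa [add_assoc] using hftc

lemma succ_right (m n : ℕ) :
    hermiteIntegral m (n + 1) = hermiteIntegral (m + 1) n - hermiteIntegral m n := by
  simp only [hermiteIntegral]
  rw [← intervalIntegral.integral_sub (intervalIntegrable (m + 1) n) (intervalIntegrable m n)]
  exact intervalIntegral.integral_congr fun x _ => by ring

lemma zero_zero : hermiteIntegral 0 0 = exp 1 - 1 := by
  simp [hermiteIntegral, integral_exp]

lemma one_zero : hermiteIntegral 1 0 = 1 := by
  have hderiv : ∀ x ∈ Set.uIcc (0 : ℝ) 1,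
      HasDerivAt (fun y : ℝ => (y - 1) * exp y) (x ^ 1 * (x - 1) ^ 0 * exp x) x := fun x _ =>
    (((hasDerivAt_id x).sub_const 1).fun_mul (hasDerivAt_exp x)).congr_deriv (by simp; ring)
  rw [hermiteIntegral, intervalIntegral.integral_eq_sub_of_hasDerivAt hderiv
    (intervalIntegrable 1 0)]
  simp

lemma abs_le_exp_one (m n : ℕ) : |hermiteIntegral m n| ≤ exp 1 := by
  have hbound : ∀ x ∈ Set.uIoc (0 : ℝ) 1, ‖x ^ m * (x - 1) ^ n * exp x‖ ≤ exp 1 := by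
    intro x hx
    obtain ⟨hx0, hx1⟩ : 0 < x ∧ x ≤ 1 := by simpa using hx
    simp only [norm_mul, norm_pow, Real.norm_eq_abs, abs_exp]
    calc |x| ^ m * |x - 1| ^ n * exp x ≤ 1 * 1 * exp 1 := by
          gcongr
          · exact pow_le_one₀ (abs_nonneg x) (by rw [_root_.abs_le]; constructor <;> linarith)
          · exact pow_le_one₀ (abs_nonneg _) (by rw [_root_.abs_le]; constructor <;> linarith)
      _ = exp 1 := by ring
  simpa [hermiteIntegral] using intervalIntegral.norm_integral_le_of_norm_le_const hbound

lemma diag_succ (n : ℕ) :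
    hermiteIntegral (n + 1) (n + 1)
      = -(n + 1) * (hermiteIntegral (n + 1) n + hermiteIntegral n (n + 1)) := by
  linear_combination integration_by_parts n n

lemma succ_diag (n : ℕ) :
    hermiteIntegral (n + 2) (n + 1)
      = -2 * (n + 1) * hermiteIntegral (n + 1) (n + 1) + (n + 1) * hermiteIntegral n (n + 1) := by
  have h := integration_by_parts (n + 1) n
  push_cast at h
  linear_combination h + (n + 1) * succ_right (n + 1) n - diag_succ n

lemma zero_one : hermiteIntegral 0 1 = 2 - exp 1 := by
  rw [succ_right, one_zero, zero_zero]; ring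

lemma one_one : hermiteIntegral 1 1 = exp 1 - 3 := by
  have h := diag_succ 0
  simp only [zero_add, Nat.cast_zero, zero_one, one_zero] at h
  rw [h]; ring

end hermiteIntegral

namespace ConvergentError

open hermiteIntegral

-- `r m` stands for the error `p m - q m * e` of the `m`-th convergent of `[2; 1, 2, 1, 1, 4, …]`.
variable {r : ℕ → ℝ} (h1 : r 1 = 2 - exp 1) (h2 : r 2 = 3 - exp 1)
    (hr0 : ∀ n : ℕ, r (3 * n + 3) = 2 * (n + 1) * r (3 * n + 2) + r (3 * n + 1))
    (hr1 : ∀ n : ℕ, r (3 * n + 4) = r (3 * n + 3) + r (3 * n + 2))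
    (hr2 : ∀ n : ℕ, r (3 * n + 5) = r (3 * n + 4) + r (3 * n + 3))
include h1 h2 hr0 hr1 hr2

lemma hermiteIntegral_eq_factorial_mul (n : ℕ) :
    hermiteIntegral n (n + 1) = n ! * r (3 * n + 1)
      ∧ hermiteIntegral (n + 1) (n + 1) = -((n + 1)! * r (3 * n + 2))
      ∧ hermiteIntegral (n + 2) (n + 1) = (n + 1)! * r (3 * n + 3) := by
  have hnext : ∀ k : ℕ, hermiteIntegral k (k + 1) = k ! * r (3 * k + 1) →
      hermiteIntegral (k + 1) (k + 1) = -((k + 1)! * r (3 * k + 2)) →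
      hermiteIntegral (k + 2) (k + 1) = (k + 1)! * r (3 * k + 3) := by
    intro k hC hA
    rw [succ_diag, hC, hA, hr0, Nat.factorial_succ]
    push_cast; ring
  induction n with
  | zero =>
    have hC : hermiteIntegral 0 1 = (0 : ℕ)! * r 1 := by simp [zero_one, h1]
    have hA : hermiteIntegral 1 1 = -((0 + 1)! * r 2) := by simp [one_one, h2]
    exact ⟨hC, hA, hnext 0 hC hA⟩
  | succ n ih =>
    obtain ⟨hC, hA, hB⟩ := ih
    have hC' : hermiteIntegral (n + 1) (n + 2) = (n + 1)! * r (3 * n + 4) := by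
      rw [succ_right, hB, hA, hr1]; ring
    have hA' : hermiteIntegral (n + 2) (n + 2) = -((n + 2)! * r (3 * n + 5)) := by
      rw [diag_succ, hB, hC', hr2, Nat.factorial_succ (n + 1)]
      push_cast; ring
    refine ⟨by simpa [mul_add] using hC', by simpa [mul_add] using hA', ?_⟩
    simpa [mul_add, add_assoc] using hnext (n + 1) (by simpa [mul_add] using hC')
      (by simpa [mul_add] using hA')

lemma abs_le_exp_one_div_factorial (m : ℕ) : |r (m + 1)| ≤ exp 1 / (m / 3)! := by
  have abs_le_of_factorial_mul : ∀ (k : ℕ) (x : ℝ), |(k ! : ℝ) * x| ≤ exp 1 → m / 3 ≤ k →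
      |x| ≤ exp 1 / (m / 3)! := by
    intro k x hx hk
    have hfac : ((m / 3)! : ℝ) ≤ k ! := by exact_mod_cast Nat.factorial_le hk
    rw [le_div_iff₀' (by positivity)]
    calc ((m / 3)! : ℝ) * |x| ≤ k ! * |x| := by gcongr
      _ = |(k ! : ℝ) * x| := by rw [abs_mul, Nat.abs_cast]
      _ ≤ exp 1 := hx
  obtain ⟨hC, hA, hB⟩ := hermiteIntegral_eq_factorial_mul h1 h2 hr0 hr1 hr2 (m / 3)
  obtain h | h | h : m + 1 = 3 * (m / 3) + 1 ∨ m + 1 = 3 * (m / 3) + 2 ∨ m + 1 = 3 * (m / 3) + 3 :=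
    by omega
  · rw [h]
    exact abs_le_of_factorial_mul _ _ (by rw [← hC]; exact abs_le_exp_one _ _) le_rfl
  · rw [h]
    exact abs_le_of_factorial_mul _ _ (by rw [← abs_neg, ← hA]; exact abs_le_exp_one _ _) (by omega)
  · rw [h]
    exact abs_le_of_factorial_mul _ _ (by rw [← hB]; exact abs_le_exp_one _ _) (by omega)

lemma tendsto_zero : Tendsto r atTop (𝓝 0) := by
  rw [← tendsto_add_atTop_iff_nat 1]
  refine squeeze_zero_norm (abs_le_exp_one_div_factorial h1 h2 hr0 hr1 hr2) ?_
  exact tendsto_const_nhds.div_atTop <| tendsto_natCast_atTop_atTop.comp <|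
    factorial_tendsto_atTop.comp (Nat.tendsto_div_const_atTop three_ne_zero)

end ConvergentError

lemma one_le_of_recurrence {a : ℕ → ℕ} {q : ℕ → ℤ} (hq1 : 1 ≤ q 1) (hq2 : 1 ≤ q 2)
    (hrec : ∀ n : ℕ, 3 ≤ n → q n = a n * q (n - 1) + q (n - 2)) {n : ℕ} (hn : 1 ≤ n) :
    1 ≤ q n := by
  have hpair : ∀ k : ℕ, 1 ≤ q (k + 1) ∧ 1 ≤ q (k + 2) := by
    intro k
    induction k with
    | zero => exact ⟨hq1, hq2⟩
    | succ k ih =>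
      refine ⟨ih.2, ?_⟩
      have hq := hrec (k + 3) (by omega)
      rw [show k + 3 - 1 = k + 2 by omega, show k + 3 - 2 = k + 1 by omega] at hq
      rw [hq]
      nlinarith [Int.natCast_nonneg (a (k + 3)), ih.1, ih.2]
  obtain ⟨m, rfl⟩ : ∃ m, n = m + 1 := ⟨n - 1, by omega⟩
  exact (hpair m).1

lemma tendsto_div_of_tendsto_sub_mul {p q : ℕ → ℝ} {x : ℝ} (hq : ∀ᶠ n in atTop, 1 ≤ q n)
    (h : Tendsto (fun n => p n - q n * x) atTop (𝓝 0)) :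
    Tendsto (fun n => p n / q n) atTop (𝓝 x) := by
  have herr : Tendsto (fun n => p n / q n - x) atTop (𝓝 0) := by
    refine squeeze_zero_norm' ?_ (tendsto_zero_iff_norm_tendsto_zero.1 h)
    filter_upwards [hq] with n hn
    rw [show p n / q n - x = (p n - q n * x) / q n by field_simp, norm_div,
      Real.norm_of_nonneg (by linarith : (0 : ℝ) ≤ q n)]
    exact div_le_self (norm_nonneg _) hn
  simpa using herr.add_const x

theorem stmt10_general (a : ℕ → ℕ) (p q : ℕ → ℤ)
    (ha3 : ∀ k : ℕ, 1 ≤ k → a (3 * k) = 2 * k)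
    (ha : ∀ k : ℕ, 1 ≤ k → a (3 * k - 1) = 1 ∧ a (3 * k + 1) = 1)
    (hp1 : p 1 = 2) (hp2 : p 2 = 3) (hq1 : q 1 = 1) (hq2 : q 2 = 1)
    (hrec : ∀ n : ℕ, 3 ≤ n →
      p n = a n * p (n - 1) + p (n - 2) ∧ q n = a n * q (n - 1) + q (n - 2)) :
    Filter.Tendsto (fun n => (p n : ℝ) / (q n : ℝ)) Filter.atTop
      (nhds (Real.exp 1)) := by
  set r : ℕ → ℝ := fun n => p n - q n * exp 1
  have hr : ∀ n : ℕ, r (n + 3) = a (n + 3) * r (n + 2) + r (n + 1) := by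
    intro n
    obtain ⟨hp, hq⟩ := hrec (n + 3) (by omega)
    simp only [r, hp, hq, show n + 3 - 1 = n + 2 by omega, show n + 3 - 2 = n + 1 by omega]
    push_cast; ring
  have hq : ∀ᶠ n in atTop, (1 : ℝ) ≤ q n := by
    filter_upwards [eventually_ge_atTop 1] with n hn
    exact_mod_cast one_le_of_recurrence hq1.ge hq2.ge (fun n hn => (hrec n hn).2) hn
  refine tendsto_div_of_tendsto_sub_mul hq (ConvergentError.tendsto_zero (r := r) ?_ ?_ ?_ ?_ ?_)
  · simp [r, hp1, hq1]
  · simp [r, hp2, hq2]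
  · intro n
    rw [hr, show 3 * n + 3 = 3 * (n + 1) by ring, ha3 (n + 1) (by omega)]
    push_cast; ring
  · intro n
    rw [hr, show 3 * n + 4 = 3 * (n + 1) + 1 by ring, (ha (n + 1) (by omega)).2]
    push_cast; ring
  · intro n
    rw [hr, show 3 * n + 5 = 3 * (n + 2) - 1 by omega, (ha (n + 2) (by omega)).1]
    push_cast; ring

theorem stmt10 (a : ℕ → ℕ) (p q : ℕ → ℤ)
    (ha1 : a 1 = 2)
    (ha3 : ∀ k : ℕ, 1 ≤ k → a (3 * k) = 2 * k)
    (ha : ∀ k : ℕ, 1 ≤ k → a (3 * k - 1) = 1 ∧ a (3 * k + 1) = 1)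
    (hp1 : p 1 = 2) (hp2 : p 2 = 3) (hq1 : q 1 = 1) (hq2 : q 2 = 1)
    (hrec : ∀ n : ℕ, 3 ≤ n →
      p n = a n * p (n - 1) + p (n - 2) ∧ q n = a n * q (n - 1) + q (n - 2)) :
    Filter.Tendsto (fun n => (p n : ℝ) / (q n : ℝ)) Filter.atTop
      (nhds (Real.exp 1)) :=
  stmt10_general a p q ha3 ha hp1 hp2 hq1 hq2 hrec
end
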